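/- Fixed point of delayed strategies: Let t = t_0 < t_1 < … < t_N = T. Let α map controls v : [t,T] → V to controls u : [t,T] → U such that the restriction of α(v) to [t_{l−1}, t_l) depends only on the restriction of v to [t, t_{l−1}) (for each l = 1,…,N), and let β map controls u to controls v with the symmetric delay property. Then there exists a pair (u,v), unique up to almost-everywhere equality, with α(v) = u a.e. and β(u) = v a.e. on [t,T]. -/

import Mathlib

/-!
Delays make the fixed-point problem causal. Encoding the pair `(u, v)` as one `U × V`-valued
control, `Φ (u, v) = (α v, β u)` is again a strategy with delay, so on `[τ_0, τ_i)` its Picard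
iterates are stationary from the `i`-th one on, and the `N`-th iterate is a fixed point on
`[τ_0, τ_N)`. Two fixed points agree on `[τ_0, τ_i)` by induction on `i`: on `[τ_i, τ_{i+1})`
each is the image under `Φ` of its values on `[τ_0, τ_i)`. The endpoint `T` is a null set.
-/

open MeasureTheory Set

section

variable {ι β : Type*} [MeasurableSpace ι] [LinearOrder ι] {μ : Measure ι} {f g : ι → β}

lemma ae_eq_restrict_Ico_iff [TopologicalSpace ι] [OrderClosedTopology ι]
    [OpensMeasurableSpace ι] [NullSingletonClass μ] {a b : ι} :
    f =ᵐ[μ.restrict (Ico a b)] g ↔ ∀ᵐ s ∂μ, s ∈ Icc a b → f s = g s := by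
  rw [Measure.restrict_congr_set Ico_ae_eq_Icc]
  exact ae_restrict_iff' measurableSet_Icc

lemma ae_eq_restrict_Ico_of_Ico_of_Ico {a b c : ι}
    (hab : f =ᵐ[μ.restrict (Ico a b)] g) (hbc : f =ᵐ[μ.restrict (Ico b c)] g) :
    f =ᵐ[μ.restrict (Ico a c)] g :=
  ae_restrict_of_ae_restrict_of_subset Ico_subset_Ico_union_Ico
    ((ae_restrict_union_iff _ _ _).2 ⟨hab, hbc⟩)

end

def IsDelayed {ι X Y : Type*} [MeasurableSpace ι] [LinearOrder ι] (μ : Measure ι) {N : ℕ}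
    (τ : Fin (N + 1) → ι) (Φ : (ι → X) → ι → Y) : Prop :=
  ∀ l : Fin N, ∀ f g : ι → X, f =ᵐ[μ.restrict (Ico (τ 0) (τ l.castSucc))] g →
    Φ f =ᵐ[μ.restrict (Ico (τ l.castSucc) (τ l.succ))] Φ g

namespace IsDelayed

variable {ι : Type*} [MeasurableSpace ι] [LinearOrder ι] {μ : Measure ι} {N : ℕ}
  {τ : Fin (N + 1) → ι}

lemma iff_forall_ae [TopologicalSpace ι] [OrderClosedTopology ι] [OpensMeasurableSpace ι]
    {X Y : Type*} {Φ : (ι → X) → ι → Y} :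
    IsDelayed μ τ Φ ↔ ∀ l : Fin N, ∀ f g : ι → X,
      (∀ᵐ s ∂μ, s ∈ Ico (τ 0) (τ l.castSucc) → f s = g s) →
      ∀ᵐ s ∂μ, s ∈ Ico (τ l.castSucc) (τ l.succ) → Φ f s = Φ g s := by
  simp only [IsDelayed, Filter.EventuallyEq, ae_restrict_iff' measurableSet_Ico]

theorem pair {U V : Type*} {α : (ι → V) → ι → U} {β : (ι → U) → ι → V}
    (hα : IsDelayed μ τ α) (hβ : IsDelayed μ τ β) :
    IsDelayed μ τ (fun w s => (α (Prod.snd ∘ w) s, β (Prod.fst ∘ w) s)) :=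
  fun l _ _ h => (hα l _ _ (h.fun_comp _)).prodMk (hβ l _ _ (h.fun_comp _))

variable {W : Type*} {Φ : (ι → W) → ι → W}

lemma iterate_ae_eq_iterate_succ (hΦ : IsDelayed μ τ Φ) (w₀ : ι → W) (i : Fin (N + 1)) :
    ∀ n ≥ (i : ℕ), Φ^[n] w₀ =ᵐ[μ.restrict (Ico (τ 0) (τ i))] Φ^[n + 1] w₀ := by
  induction i using Fin.induction with
  | zero => simp [Filter.EventuallyEq]
  | succ l ih =>
    intro n hn
    obtain ⟨m, rfl⟩ : ∃ m, n = m + 1 := ⟨n - 1, by simp at hn; omega⟩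
    refine ae_eq_restrict_Ico_of_Ico_of_Ico (ih _ (by simp at hn ⊢; omega)) ?_
    rw [Function.iterate_succ_apply', Function.iterate_succ_apply' Φ (m + 1)]
    exact hΦ l _ _ (ih m (by simp at hn ⊢; omega))

lemma exists_ae_fixedPoint [Nonempty W] (hΦ : IsDelayed μ τ Φ) :
    ∃ w, Φ w =ᵐ[μ.restrict (Ico (τ 0) (τ (Fin.last N)))] w := by
  obtain ⟨w₀⟩ : Nonempty (ι → W) := inferInstance
  refine ⟨Φ^[N] w₀, ?_⟩
  rw [← Function.iterate_succ_apply' Φ N]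
  exact (hΦ.iterate_ae_eq_iterate_succ w₀ _ N (by simp)).symm

lemma ae_fixedPoint_unique (hΦ : IsDelayed μ τ Φ) (hτ : Monotone τ) {w w' : ι → W}
    (hw : Φ w =ᵐ[μ.restrict (Ico (τ 0) (τ (Fin.last N)))] w)
    (hw' : Φ w' =ᵐ[μ.restrict (Ico (τ 0) (τ (Fin.last N)))] w') (i : Fin (N + 1)) :
    w =ᵐ[μ.restrict (Ico (τ 0) (τ i))] w' := by
  induction i using Fin.induction with
  | zero => simp [Filter.EventuallyEq]
  | succ l ih =>
    have hsub : Ico (τ l.castSucc) (τ l.succ) ⊆ Ico (τ 0) (τ (Fin.last N)) :=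
      Ico_subset_Ico (hτ (Fin.zero_le _)) (hτ (Fin.le_last _))
    have hle := ae_mono (Measure.restrict_mono hsub le_rfl (μ := μ))
    refine ae_eq_restrict_Ico_of_Ico_of_Ico ih ?_
    calc w =ᵐ[μ.restrict (Ico (τ l.castSucc) (τ l.succ))] Φ w := (hw.filter_mono hle).symm
      _ =ᵐ[μ.restrict (Ico (τ l.castSucc) (τ l.succ))] Φ w' := hΦ l _ _ ih
      _ =ᵐ[μ.restrict (Ico (τ l.castSucc) (τ l.succ))] w' := hw'.filter_mono hle

end IsDelayed

theorem stmt15_general (U V : Type*) [Nonempty V] (N : ℕ)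
    (t T : ℝ) (τ : Fin (N + 1) → ℝ) (hτ : StrictMono τ)
    (h0 : τ 0 = t) (hT : τ (Fin.last N) = T)
    (α : (ℝ → V) → (ℝ → U)) (β : (ℝ → U) → (ℝ → V))
    (hα : ∀ l : Fin N, ∀ v v' : ℝ → V,
      (∀ᵐ s ∂volume, s ∈ Set.Ico t (τ l.castSucc) → v s = v' s) →
      (∀ᵐ s ∂volume, s ∈ Set.Ico (τ l.castSucc) (τ l.succ) → α v s = α v' s))
    (hβ : ∀ l : Fin N, ∀ u u' : ℝ → U,
      (∀ᵐ s ∂volume, s ∈ Set.Ico t (τ l.castSucc) → u s = u' s) →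
      (∀ᵐ s ∂volume, s ∈ Set.Ico (τ l.castSucc) (τ l.succ) → β u s = β u' s)) :
    ∃ (u : ℝ → U) (v : ℝ → V),
      ((∀ᵐ s ∂volume, s ∈ Set.Icc t T → α v s = u s) ∧
       (∀ᵐ s ∂volume, s ∈ Set.Icc t T → β u s = v s)) ∧
      ∀ (u' : ℝ → U) (v' : ℝ → V),
        ((∀ᵐ s ∂volume, s ∈ Set.Icc t T → α v' s = u' s) ∧
         (∀ᵐ s ∂volume, s ∈ Set.Icc t T → β u' s = v' s)) →
        (∀ᵐ s ∂volume, s ∈ Set.Icc t T → u s = u' s) ∧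
        (∀ᵐ s ∂volume, s ∈ Set.Icc t T → v s = v' s) := by
  subst h0 hT
  have : Nonempty U := ⟨α (fun _ => Classical.arbitrary V) (τ 0)⟩
  have hΦ := (IsDelayed.iff_forall_ae.2 hα).pair (IsDelayed.iff_forall_ae.2 hβ)
  obtain ⟨w, hw⟩ := hΦ.exists_ae_fixedPoint
  refine ⟨Prod.fst ∘ w, Prod.snd ∘ w, ⟨ae_eq_restrict_Ico_iff.1 (hw.fun_comp Prod.fst),
    ae_eq_restrict_Ico_iff.1 (hw.fun_comp Prod.snd)⟩, ?_⟩
  rintro u' v' ⟨hu', hv'⟩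
  have hw' := (ae_eq_restrict_Ico_iff.2 hu').prodMk (ae_eq_restrict_Ico_iff.2 hv')
  have hww' :=
    hΦ.ae_fixedPoint_unique hτ.monotone (w' := fun s => (u' s, v' s)) hw hw' (Fin.last N)
  exact ⟨ae_eq_restrict_Ico_iff.1 (hww'.fun_comp Prod.fst),
    ae_eq_restrict_Ico_iff.1 (hww'.fun_comp Prod.snd)⟩

/-- Fixed point of delayed strategies: if `α` and `β` are non-anticipative
strategies with delay along the partition `t = τ_0 < τ_1 < … < τ_N = T` (their value on
`[τ_{l-1}, τ_l)` depends only on the opponent's control on `[t, τ_{l-1})` up to a.e.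
equality), then there is a pair of controls `(u,v)`, unique up to a.e. equality on
`[t,T]`, with `α(v) = u` a.e. and `β(u) = v` a.e. -/
theorem stmt15 (U V : Type*) [Nonempty U] [Nonempty V] (N : ℕ)
    (t T : ℝ) (τ : Fin (N + 1) → ℝ) (hτ : StrictMono τ)
    (h0 : τ 0 = t) (hT : τ (Fin.last N) = T)
    (α : (ℝ → V) → (ℝ → U)) (β : (ℝ → U) → (ℝ → V))
    (hα : ∀ l : Fin N, ∀ v v' : ℝ → V,
      (∀ᵐ s ∂volume, s ∈ Set.Ico t (τ l.castSucc) → v s = v' s) →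
      (∀ᵐ s ∂volume, s ∈ Set.Ico (τ l.castSucc) (τ l.succ) → α v s = α v' s))
    (hβ : ∀ l : Fin N, ∀ u u' : ℝ → U,
      (∀ᵐ s ∂volume, s ∈ Set.Ico t (τ l.castSucc) → u s = u' s) →
      (∀ᵐ s ∂volume, s ∈ Set.Ico (τ l.castSucc) (τ l.succ) → β u s = β u' s)) :
    ∃ (u : ℝ → U) (v : ℝ → V),
      ((∀ᵐ s ∂volume, s ∈ Set.Icc t T → α v s = u s) ∧
       (∀ᵐ s ∂volume, s ∈ Set.Icc t T → β u s = v s)) ∧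
      ∀ (u' : ℝ → U) (v' : ℝ → V),
        ((∀ᵐ s ∂volume, s ∈ Set.Icc t T → α v' s = u' s) ∧
         (∀ᵐ s ∂volume, s ∈ Set.Icc t T → β u' s = v' s)) →
        (∀ᵐ s ∂volume, s ∈ Set.Icc t T → u s = u' s) ∧
        (∀ᵐ s ∂volume, s ∈ Set.Icc t T → v s = v' s) :=
  stmt15_general U V N t T τ hτ h0 hT α β hα hβ
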